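/- For every m ≥ 1 and every k ∈ 𝕋², the m-step transition kernel has the explicit form Pᵐ(k,dk') = (2/∑_{γ=1}^2 sin²(πk_γ)) ∑_{α=1}^2 ∑_{β=1}^2 sin²(πk_α) A^{(m)}_{α,β} sin²(πk'_β) dk', where A^{(1)}_{α,β} = δ_{α,β} and A^{(m+1)} = aᵐ (the m-th power of the matrix a) for all m ≥ 1. -/

import Mathlib

/-!
The one-step density is of rank two: with `s(k) = (sin²(πk₁), sin²(πk₂))` and
`S(k) = s₁(k) + s₂(k)`, `Φ(k)⁻¹ R(k,k') = (2 / S(k)) s(k) ⬝ s(k')`. Hence every measure with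
density `c ⬝ s(k')`, `c ≥ 0`, is mapped by one step of `P` to the measure with density
`(c a) ⬝ s(k')`, since `∫ (2 / S) s_β s_γ = a_βγ`. Starting from `P(k, ·)`, whose coefficient
vector is `(2 / S(k)) s(k)`, the `m`-step kernel has coefficient vector `(2 / S(k)) s(k) a^(m-1)`.
-/

open MeasureTheory Real Filter Set
open scoped ENNReal NNReal

noncomputable section

instance : Fact ((0:ℝ) < 1) := ⟨one_pos⟩

/-- The one-dimensional torus `ℝ/ℤ`. -/
abbrev Torus := AddCircle (1 : ℝ)

/-- The two-dimensional torus `𝕋²`. -/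
abbrev T2 := Torus × Torus

lemma sin_sq_periodic : Function.Periodic (fun x : ℝ => Real.sin (π * x) ^ 2) 1 := by
  intro x
  simp only []
  have h : π * (x + 1) = π * x + π := by ring
  rw [h, Real.sin_add_pi]
  ring

lemma sincos_periodic :
    Function.Periodic (fun x : ℝ => Real.sin (π * x) * Real.cos (π * x)) 1 := by
  intro x
  simp only []
  have h : π * (x + 1) = π * x + π := by ring
  rw [h, Real.sin_add_pi, Real.cos_add_pi]
  ring

/-- `sin²(π k)` as a function on the circle. -/
def sin2 : Torus → ℝ := sin_sq_periodic.lift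

/-- `sin(π k) cos(π k)` as a function on the circle. -/
def sincos : Torus → ℝ := sincos_periodic.lift

/-- The components of a point of the torus. -/
def tcomp (k : T2) : Fin 2 → Torus := ![k.1, k.2]

/-- `Φ(k) = 8 ∑_α sin²(π k_α)`. -/
def Phi (k : T2) : ℝ := 8 * (sin2 k.1 + sin2 k.2)

/-- The scattering kernel `R(k,k') = 16 ∑_α sin²(π k_α) sin²(π k'_α)`. -/
def Rker (k k' : T2) : ℝ := 16 * (sin2 k.1 * sin2 k'.1 + sin2 k.2 * sin2 k'.2)

/-- The velocity `v_α(k) = sin(π k_α) cos(π k_α) / (∑_β sin²(π k_β))^{1/2}`. -/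
def vel (α : Fin 2) (k : T2) : ℝ :=
  sincos (tcomp k α) / Real.sqrt (sin2 k.1 + sin2 k.2)

/-- `ψ(k) = Φ(k)⁻¹ v(k)`. -/
def psiC (α : Fin 2) (k : T2) : ℝ := vel α k / Phi k

/-- The Markov transition kernel `P(k,dk') = Φ(k)⁻¹ R(k,k') dk'` on `𝕋²`. -/
def Pker (k : T2) : Measure T2 :=
  (volume : Measure T2).withDensity fun k' => ENNReal.ofReal ((Phi k)⁻¹ * Rker k k')

/-- The `m`-step kernel (`Pn 0 k` is the Dirac mass at `k`). -/
def Pn : ℕ → T2 → Measure T2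
  | 0, k => Measure.dirac k
  | (m + 1), k => (Pn m k).bind Pker

/-- The measure `π(dk) = (1/8) Φ(k) dk`. -/
def piM : Measure T2 :=
  (volume : Measure T2).withDensity fun k => ENNReal.ofReal ((1 / 8) * Phi k)

/-- The exponential distribution with mean one. -/
def expMeasure : Measure ℝ :=
  (volume : Measure ℝ).withDensity fun z =>
    if 0 ≤ z then ENNReal.ofReal (Real.exp (-z)) else 0


/-- The matrix `a` with `a₁₁ = a₂₂ = 2∫ sin⁴(πk₁)/(∑_α sin²(πk_α)) dk` and
`a₁₂ = a₂₁ = 2∫ sin²(πk₁)sin²(πk₂)/(∑_α sin²(πk_α)) dk`. -/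
def aMat : Matrix (Fin 2) (Fin 2) ℝ :=
  Matrix.of fun i j =>
    if i = j then 2 * ∫ k : T2, (sin2 k.1) ^ 2 / (sin2 k.1 + sin2 k.2)
    else 2 * ∫ k : T2, sin2 k.1 * sin2 k.2 / (sin2 k.1 + sin2 k.2)

/-- `A^(1) = Id`, `A^(m+1) = aᵐ` for `m ≥ 1`. -/
def Amat (m : ℕ) : Matrix (Fin 2) (Fin 2) ℝ := aMat ^ (m - 1)

open ProbabilityTheory Matrix

theorem MeasureTheory.Measure.bind_withDensity_eq {α β : Type*} [MeasurableSpace α] [MeasurableSpace β]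
    (μ : Measure α) [SFinite μ] (ν : Measure β) [SFinite ν] {f : α → β → ℝ≥0∞}
    (hf : Measurable (Function.uncurry f)) :
    μ.bind (fun a => ν.withDensity (f a)) = ν.withDensity fun b => ∫⁻ a, f a b ∂μ := by
  ext s hs
  simp_rw [Measure.bind_apply hs (measurable_withDensity hf).aemeasurable, withDensity_apply _ hs]
  exact lintegral_lintegral_swap hf.aemeasurable

section vecMul

variable {ι κ R : Type*} [Fintype ι] [Semiring R] [PartialOrder R] [IsOrderedRing R]

lemma Matrix.vecMul_nonneg {c : ι → R} {A : Matrix ι κ R} (hc : 0 ≤ c) (hA : ∀ i j, 0 ≤ A i j) :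
    0 ≤ c ᵥ* A :=
  fun j => Finset.sum_nonneg fun i _ => mul_nonneg (hc i) (hA i j)

lemma Matrix.vecMul_pow_nonneg [DecidableEq ι] {c : ι → R} {A : Matrix ι ι R} (hc : 0 ≤ c)
    (hA : ∀ i j, 0 ≤ A i j) (n : ℕ) : 0 ≤ c ᵥ* A ^ n := by
  induction n with
  | zero => simpa using hc
  | succ n ih => rw [pow_succ, ← vecMul_vecMul]; exact vecMul_nonneg ih hA

end vecMul

lemma sin2_coe (x : ℝ) : sin2 x = sin (π * x) ^ 2 := sin_sq_periodic.lift_coe x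

lemma sin2_nonneg (x : Torus) : 0 ≤ sin2 x := by
  induction x using QuotientAddGroup.induction_on with
  | H y => rw [sin2_coe]; positivity

lemma sin2_le_one (x : Torus) : sin2 x ≤ 1 := by
  induction x using QuotientAddGroup.induction_on with
  | H y => rw [sin2_coe]; exact sin_sq_le_one _

lemma continuous_sin2 : Continuous sin2 := by
  rw [(QuotientAddGroup.isQuotientMap_mk _).continuous_iff]
  exact (by fun_prop : Continuous fun x : ℝ => sin (π * x) ^ 2).congr fun x => (sin2_coe x).symm

@[fun_prop]
lemma measurable_sin2 : Measurable sin2 := continuous_sin2.measurable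

lemma integral_comp_swap_T2 (f : T2 → ℝ) : ∫ k : T2, f k.swap = ∫ k : T2, f k :=
  integral_prod_swap f

def sinVec (k : T2) : Fin 2 → ℝ := fun α => sin2 (tcomp k α)

@[simp] lemma sinVec_zero (k : T2) : sinVec k 0 = sin2 k.1 := rfl

@[simp] lemma sinVec_one (k : T2) : sinVec k 1 = sin2 k.2 := rfl

lemma sinVec_nonneg (k : T2) : 0 ≤ sinVec k := fun _ => sin2_nonneg _

lemma sinVec_le_sum (k : T2) (α : Fin 2) : sinVec k α ≤ sin2 k.1 + sin2 k.2 := by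
  fin_cases α
  · exact le_add_of_nonneg_right (sin2_nonneg _)
  · exact le_add_of_nonneg_left (sin2_nonneg _)

@[fun_prop]
lemma measurable_sinVec_apply (α : Fin 2) : Measurable fun k => sinVec k α := by
  fin_cases α <;> simp only [Fin.zero_eta, Fin.mk_one, sinVec_zero, sinVec_one] <;> fun_prop

def sinVecMeasure (c : Fin 2 → ℝ) : Measure T2 :=
  volume.withDensity fun k' => ENNReal.ofReal (c ⬝ᵥ sinVec k')

def PkerCoeff (k : T2) : Fin 2 → ℝ := (2 / (sin2 k.1 + sin2 k.2)) • sinVec k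

lemma PkerCoeff_nonneg (k : T2) : 0 ≤ PkerCoeff k :=
  smul_nonneg (div_nonneg zero_le_two (add_nonneg (sin2_nonneg _) (sin2_nonneg _)))
    (sinVec_nonneg k)

lemma PkerCoeff_le_two (k : T2) (α : Fin 2) : PkerCoeff k α ≤ 2 := by
  have h : sinVec k α / (sin2 k.1 + sin2 k.2) ≤ 1 :=
    div_le_one_of_le₀ (sinVec_le_sum k α) (add_nonneg (sin2_nonneg _) (sin2_nonneg _))
  calc PkerCoeff k α = 2 * (sinVec k α / (sin2 k.1 + sin2 k.2)) := by
        simp only [PkerCoeff, Pi.smul_apply, smul_eq_mul]; ring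
    _ ≤ 2 := by linarith

@[fun_prop]
lemma measurable_PkerCoeff_apply (α : Fin 2) : Measurable fun k => PkerCoeff k α := by
  simp only [PkerCoeff, Pi.smul_apply, smul_eq_mul]
  fun_prop

lemma Phi_inv_mul_Rker (k k' : T2) : (Phi k)⁻¹ * Rker k k' = PkerCoeff k ⬝ᵥ sinVec k' := by
  simp only [Phi, mul_inv, Rker, PkerCoeff, dotProduct, Fin.sum_univ_two, Pi.smul_apply, smul_eq_mul,
    sinVec_zero, sinVec_one]
  ring

lemma Pker_eq_sinVecMeasure (k : T2) : Pker k = sinVecMeasure (PkerCoeff k) := by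
  simp only [Pker, sinVecMeasure, Phi_inv_mul_Rker]

lemma measurable_Pker : Measurable Pker := by
  simp_rw [funext Pker_eq_sinVecMeasure, sinVecMeasure, dotProduct, Fin.sum_univ_two]
  fun_prop

lemma integrable_PkerCoeff_mul_sinVec (β γ : Fin 2) :
    Integrable fun k => PkerCoeff k β * sinVec k γ := by
  refine (integrable_const (2 : ℝ)).mono' (by fun_prop) (ae_of_all _ fun k => ?_)
  rw [Real.norm_of_nonneg (mul_nonneg (PkerCoeff_nonneg k β) (sinVec_nonneg k γ))]
  exact (mul_le_of_le_one_right (PkerCoeff_nonneg k β) (sin2_le_one _)).trans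
    (PkerCoeff_le_two k β)

lemma integral_PkerCoeff_mul_sinVec (β γ : Fin 2) :
    ∫ k, PkerCoeff k β * sinVec k γ = aMat β γ := by
  fin_cases β <;> fin_cases γ <;>
    simp only [aMat, of_apply, ← integral_const_mul, PkerCoeff, Pi.smul_apply, smul_eq_mul,
      Fin.zero_eta, Fin.mk_one, Fin.isValue, sinVec_zero, sinVec_one, zero_ne_one, one_ne_zero,
      ↓reduceIte]
  · congr 1 with k; ring
  · congr 1 with k; ring
  · congr 1 with k; ring
  · rw [← integral_comp_swap_T2]
    congr 1 with k
    simp only [Prod.fst_swap, Prod.snd_swap]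
    ring

lemma aMat_nonneg (β γ : Fin 2) : 0 ≤ aMat β γ :=
  integral_PkerCoeff_mul_sinVec β γ ▸
    integral_nonneg fun k => mul_nonneg (PkerCoeff_nonneg k β) (sinVec_nonneg k γ)

lemma dotProduct_sinVec_mul_dotProduct_PkerCoeff (c : Fin 2 → ℝ) (k' k'' : T2) :
    c ⬝ᵥ sinVec k' * PkerCoeff k' ⬝ᵥ sinVec k''
      = ∑ γ, ∑ β, c β * (PkerCoeff k' β * sinVec k' γ) * sinVec k'' γ := by
  simp only [PkerCoeff, dotProduct, Fin.sum_univ_two, Pi.smul_apply, smul_eq_mul]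
  ring

lemma lintegral_sinVec_mul_PkerCoeff {c : Fin 2 → ℝ} (hc : 0 ≤ c) (k'' : T2) :
    ∫⁻ k', ENNReal.ofReal (c ⬝ᵥ sinVec k') * ENNReal.ofReal (PkerCoeff k' ⬝ᵥ sinVec k'')
      = ENNReal.ofReal ((c ᵥ* aMat) ⬝ᵥ sinVec k'') := by
  set F : Fin 2 → Fin 2 → T2 → ℝ := fun γ β k' => c β * (PkerCoeff k' β * sinVec k' γ) * sinVec k'' γ
  have hF : ∀ γ β, Integrable (F γ β) := fun γ β =>
    ((integrable_PkerCoeff_mul_sinVec β γ).const_mul _).mul_const _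
  have hsum : Integrable fun k' => ∑ γ, ∑ β, F γ β k' :=
    integrable_finsetSum _ fun γ _ => integrable_finsetSum _ fun β _ => hF γ β
  calc _ = ∫⁻ k', ENNReal.ofReal (∑ γ, ∑ β, F γ β k') := by
        refine lintegral_congr fun k' => ?_
        rw [← ENNReal.ofReal_mul (dotProduct_nonneg_of_nonneg hc (sinVec_nonneg k')),
          dotProduct_sinVec_mul_dotProduct_PkerCoeff]
    _ = ENNReal.ofReal (∫ k', ∑ γ, ∑ β, F γ β k') := by
        refine (ofReal_integral_eq_lintegral_ofReal hsum (ae_of_all _ fun k' => ?_)).symm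
        change 0 ≤ ∑ γ, ∑ β, c β * (PkerCoeff k' β * sinVec k' γ) * sinVec k'' γ
        rw [← dotProduct_sinVec_mul_dotProduct_PkerCoeff]
        exact mul_nonneg (dotProduct_nonneg_of_nonneg hc (sinVec_nonneg k'))
          (dotProduct_nonneg_of_nonneg (PkerCoeff_nonneg k') (sinVec_nonneg k''))
    _ = ENNReal.ofReal ((c ᵥ* aMat) ⬝ᵥ sinVec k'') := by
        simp_rw [integral_finsetSum _ fun γ _ => integrable_finsetSum _ fun β _ => hF γ β,
          integral_finsetSum _ fun β _ => hF _ β, F, integral_mul_const, integral_const_mul,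
          integral_PkerCoeff_mul_sinVec, dotProduct, vecMul, dotProduct, Finset.sum_mul]

lemma sinVecMeasure_bind_Pker {c : Fin 2 → ℝ} (hc : 0 ≤ c) :
    (sinVecMeasure c).bind Pker = sinVecMeasure (c ᵥ* aMat) := by
  simp_rw [funext Pker_eq_sinVecMeasure, sinVecMeasure]
  rw [Measure.bind_withDensity_eq _ _
    (by simp only [dotProduct, Fin.sum_univ_two]; fun_prop)]
  congr 1 with k''
  rw [lintegral_withDensity_eq_lintegral_mul _ (by fun_prop) (by fun_prop)]
  exact lintegral_sinVec_mul_PkerCoeff hc k''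

lemma Pn_succ_eq_sinVecMeasure (m : ℕ) (k : T2) :
    Pn (m + 1) k = sinVecMeasure (PkerCoeff k ᵥ* aMat ^ m) := by
  induction m with
  | zero => rw [Pn, Pn, Measure.dirac_bind measurable_Pker, Pker_eq_sinVecMeasure, pow_zero, vecMul_one]
  | succ m ih =>
    rw [Pn, ih, sinVecMeasure_bind_Pker (vecMul_pow_nonneg (PkerCoeff_nonneg k) aMat_nonneg m),
      vecMul_vecMul, pow_succ]

/-- Explicit form of the `m`-step transition kernel:
`Pᵐ(k,dk') = (2/∑_γ sin²(πk_γ)) ∑_{α,β} sin²(πk_α) A^(m)_{αβ} sin²(πk'_β) dk'`. -/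
theorem Pn_explicit_form (m : ℕ) (hm : 1 ≤ m) (k : T2) :
    Pn m k = (volume : Measure T2).withDensity fun k' =>
      ENNReal.ofReal ((2 / (sin2 k.1 + sin2 k.2)) *
        ∑ α : Fin 2, ∑ β : Fin 2,
          sin2 (tcomp k α) * Amat m α β * sin2 (tcomp k' β)) := by
  obtain ⟨n, rfl⟩ : ∃ n, m = n + 1 := ⟨m - 1, by omega⟩
  rw [Pn_succ_eq_sinVecMeasure, sinVecMeasure, Amat, Nat.add_sub_cancel]
  congr 1 with k'
  congr 1
  simp only [PkerCoeff, dotProduct, vecMul, Fin.sum_univ_two, Pi.smul_apply, smul_eq_mul, sinVec]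
  ring

end
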